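/- arXiv:1912.08734 — 5 statements merged into one kernel-verified Lean document; each statement's English description precedes it below -/
import Mathlib

section
/- For all real ω and τ̄ > 0, the supremum over τ ∈ [0, τ̄] of |e^{-iτω} - 1| equals 2|sin(τ̄ω/2)| if |ωτ̄| ≤ π, and equals 2 if |ωτ̄| > π. -/
open Complex Real Set

lemma key_abs (θ : ℝ) :
    ‖Complex.exp ((-θ : ℝ) * Complex.I) - 1‖ = 2 * |Real.sin (θ / 2)| := by
  rw [show ((-θ : ℝ) : ℂ) * Complex.I = ((-θ : ℝ) : ℂ) * Complex.I from rfl]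
  rw [Complex.exp_mul_I]
  have h1 : Complex.cos ((-θ : ℝ) : ℂ) + Complex.sin ((-θ : ℝ) : ℂ) * Complex.I - 1
      = ((Real.cos θ - 1 : ℝ) : ℂ) + ((-Real.sin θ : ℝ) : ℂ) * Complex.I := by
    push_cast
    simp [Real.cos_neg, Real.sin_neg]
    ring
  rw [h1, Complex.norm_add_mul_I]
  have h2 : (Real.cos θ - 1) ^ 2 + (-Real.sin θ) ^ 2 = (2 * |Real.sin (θ / 2)|) ^ 2 := by
    have h2x : Real.cos (2 * (θ / 2)) = 2 * Real.cos (θ / 2) ^ 2 - 1 := Real.cos_two_mul _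
    rw [show 2 * (θ / 2) = θ by ring] at h2x
    have hpy : Real.sin (θ / 2) ^ 2 + Real.cos (θ / 2) ^ 2 = 1 := Real.sin_sq_add_cos_sq _
    have hpyth : Real.sin θ ^ 2 + Real.cos θ ^ 2 = 1 := Real.sin_sq_add_cos_sq θ
    have habs : |Real.sin (θ / 2)| ^ 2 = Real.sin (θ / 2) ^ 2 := sq_abs _
    nlinarith
  rw [h2, Real.sqrt_sq (by positivity)]

lemma abs_sin_eq (x : ℝ) (hx : |x| ≤ Real.pi) : |Real.sin x| = Real.sin |x| := by
  rcases le_or_gt 0 x with h | h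
  · rw [_root_.abs_of_nonneg h, _root_.abs_of_nonneg (Real.sin_nonneg_of_nonneg_of_le_pi h
      (by rwa [_root_.abs_of_nonneg h] at hx))]
  · rw [_root_.abs_of_neg h, Real.sin_neg, abs_of_nonpos]
    exact Real.sin_nonpos_of_nonpos_of_neg_pi_le h.le ((abs_le.mp hx).1)

lemma abs_sin_mono (a b : ℝ) (hab : |a| ≤ |b|) (hb : |b| ≤ Real.pi / 2) :
    |Real.sin a| ≤ |Real.sin b| := by
  have hpi := Real.pi_pos
  rw [abs_sin_eq a (by linarith [hab.trans hb]), abs_sin_eq b (by linarith)]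
  exact Real.strictMonoOn_sin.monotoneOn
    ⟨by linarith [abs_nonneg a], by linarith⟩ ⟨by linarith [abs_nonneg b], hb⟩ hab

/-- For all real `ω` and `τ̄ > 0`, the supremum over `τ ∈ [0, τ̄]` of `|e^{-iτω} - 1|`
equals `2|sin(τ̄ω/2)|` if `|ωτ̄| ≤ π`, and equals `2` if `|ωτ̄| > π`. -/
theorem stmt0 (ω τb : ℝ) (hτb : 0 < τb) :
    sSup ((fun τ : ℝ => ‖Complex.exp (-(τ * ω) * Complex.I) - 1‖) ''
        Set.Icc 0 τb)
      = if |ω * τb| ≤ Real.pi then 2 * |Real.sin (τb * ω / 2)| else 2 := by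
  have hfeq : ∀ τ : ℝ, ‖Complex.exp (-(τ * ω) * Complex.I) - 1‖
      = 2 * |Real.sin (τ * ω / 2)| := by
    intro τ
    have : (-(↑τ * ↑ω) * Complex.I : ℂ) = ((-(τ * ω) : ℝ) : ℂ) * Complex.I := by
      push_cast; ring
    rw [this, key_abs]
  split_ifs with hle
  · apply IsGreatest.csSup_eq
    constructor
    · exact ⟨τb, ⟨le_refl 0 |>.trans hτb.le, le_refl τb⟩, by simp only []; rw [hfeq]⟩
    · rintro y ⟨τ, ⟨hτ0, hττb⟩, rfl⟩
      simp only []; rw [hfeq]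
      have h1 : |τ * ω / 2| ≤ |τb * ω / 2| := by
        rw [abs_div, abs_div, abs_mul, abs_mul, _root_.abs_of_nonneg hτ0, _root_.abs_of_nonneg hτb.le]
        gcongr
      have h2 : |τb * ω / 2| ≤ Real.pi / 2 := by
        rw [abs_div]
        have : |τb * ω| = |ω * τb| := by rw [abs_mul, abs_mul]; ring
        rw [this]
        rw [show |(2:ℝ)| = (2:ℝ) from abs_two]
        linarith
      have := abs_sin_mono _ _ h1 h2
      linarith
  · push_neg at hle
    have hω : ω ≠ 0 := by
      intro h; rw [h] at hle; simp at hle; linarith [Real.pi_pos]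
    have hωa : 0 < |ω| := abs_pos.mpr hω
    apply IsGreatest.csSup_eq
    constructor
    · refine ⟨Real.pi / |ω|, ⟨by positivity, ?_⟩, ?_⟩
      · rw [div_le_iff₀ hωa]
        calc Real.pi ≤ |ω * τb| := hle.le
          _ = |ω| * τb := by rw [abs_mul, _root_.abs_of_nonneg hτb.le]
          _ = τb * |ω| := mul_comm _ _
      · simp only []; rw [hfeq]
        rcases hω.lt_or_gt with h | h
        · have : Real.pi / |ω| * ω / 2 = -(Real.pi / 2) := by
            rw [_root_.abs_of_neg h]; field_simp
          rw [this, Real.sin_neg, Real.sin_pi_div_two]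
          norm_num
        · have : Real.pi / |ω| * ω / 2 = Real.pi / 2 := by
            rw [_root_.abs_of_pos h]; field_simp
          rw [this, Real.sin_pi_div_two]
          norm_num
    · rintro y ⟨τ, _, rfl⟩
      simp only []; rw [hfeq]
      have : |Real.sin (τ * ω / 2)| ≤ 1 :=
        abs_le.mpr ⟨Real.neg_one_le_sin _, Real.sin_le_one _⟩
      linarith
end

section
/- Let T₀ ∈ ℂ with Re(T₀) < 1/2. Then for each τ ≥ 0 and each s ∈ ℂ with Re(s) ≥ 0, writing w = 1 - e^{-sτ}, if |1 - T₀·w| = 0 then necessarily Re(1/(w)) ≤ 1/2; consequently 1 - T₀(1 - e^{-sτ}) ≠ 0 for all s with Re(s) > 0. -/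
/-!
`e^{-sτ}` lies in the open unit disc, and `z ↦ 1 / (1 - z)` maps that disc into the half-plane
`Re > 1/2`, because `Re (1 / (1 - z)) = (1 - Re z) / |1 - z|²` and `|1 - z|² < 2 (1 - Re z)` exactly
when `|z| < 1`. So `T₀ = 1 / (1 - e^{-sτ})` is impossible when `Re T₀ < 1/2`.
-/

open Complex

lemma Complex.norm_exp_neg_mul_ofReal_lt_one {s : ℂ} {τ : ℝ} (hs : 0 < s.re) (hτ : 0 < τ) :
    ‖exp (-(s * τ))‖ < 1 := by
  rw [norm_exp, Real.exp_lt_one_iff, neg_re, re_mul_ofReal, neg_neg_iff_pos]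
  exact mul_pos hs hτ

lemma Complex.one_half_lt_re_inv_one_sub {z : ℂ} (hz : ‖z‖ < 1) : 1 / 2 < ((1 - z)⁻¹).re := by
  have hnormSq : normSq z < 1 := by
    rw [normSq_eq_norm_sq]
    nlinarith [norm_nonneg z]
  have hden : normSq (1 - z) = 1 - 2 * z.re + normSq z := by
    rw [normSq_sub, normSq_one, one_mul, conj_re]
    ring
  have hpos : 0 < normSq (1 - z) :=
    normSq_pos.mpr (sub_ne_zero.mpr fun h => by simp [← h] at hz)
  rw [inv_re, sub_re, one_re, lt_div_iff₀ hpos]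
  linarith

/-- If `Re(T₀) < 1/2`, `τ > 0` and `Re(s) > 0`, then `1 - T₀(1 - e^{-sτ}) ≠ 0`. -/
theorem stmt11 (T₀ : ℂ) (hT₀ : T₀.re < 1 / 2) (τ : ℝ) (hτ : 0 < τ)
    (s : ℂ) (hs : 0 < s.re) :
    1 - T₀ * (1 - Complex.exp (-(s * τ))) ≠ 0 := by
  intro h
  have hT : T₀ = (1 - exp (-(s * τ)))⁻¹ := eq_inv_of_mul_eq_one_left (sub_eq_zero.mp h).symm
  have := one_half_lt_re_inv_one_sub (norm_exp_neg_mul_ofReal_lt_one hs hτ)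
  rw [← hT] at this
  linarith
end

section
/- Let T : ℂ → ℂ and τ̃ > 0, and let f : [0, τ̃] × ℝ → ℂ be defined by f(τ, ω) = T(iω)(e^{-iτω} - 1). If f is continuous, f(0, ω) = 0 for all ω, and the curve ω ↦ f(τ̃, ω) has winding number ≥ 1 around -1, then there exist τ ∈ (0, τ̃) and ω ∈ ℝ with f(τ, ω) = -1. -/
open Complex Real Set Filter

/-- A continuous function on `uIcc x y` taking values in `2πℤ` is constant. -/
lemma aux_int (d : ℝ → ℝ) (x y : ℝ) (hd : ContinuousOn d (Set.uIcc x y))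
    (hZ : ∀ z ∈ Set.uIcc x y, ∃ k : ℤ, d z = 2 * Real.pi * k) : d x = d y := by
  by_contra hne
  obtain ⟨k, hk⟩ := hZ x Set.left_mem_uIcc
  obtain ⟨l, hl⟩ := hZ y Set.right_mem_uIcc
  have hkl : k ≠ l := by
    rintro rfl; exact hne (hk.trans hl.symm)
  set K : ℤ := max k l with hK
  set v : ℝ := 2 * Real.pi * K - Real.pi with hv
  have hpi := Real.pi_pos
  have hmemv : v ∈ Set.uIcc (d x) (d y) := by
    rcases hkl.lt_or_gt with h | h
    · -- k < l, so d x < d y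
      have hkl' : (k : ℝ) + 1 ≤ l := by exact_mod_cast h
      have h1 : d x ≤ v := by
        rw [hk, hv, hK, max_eq_right h.le]; nlinarith
      have h2 : v ≤ d y := by
        rw [hl, hv, hK, max_eq_right h.le]; nlinarith
      exact Set.mem_uIcc.2 (Or.inl ⟨h1, h2⟩)
    · have hkl' : (l : ℝ) + 1 ≤ k := by exact_mod_cast h
      have h1 : d y ≤ v := by
        rw [hl, hv, hK, max_eq_left h.le]; nlinarith
      have h2 : v ≤ d x := by
        rw [hk, hv, hK, max_eq_left h.le]; nlinarith
      exact Set.mem_uIcc.2 (Or.inr ⟨h1, h2⟩)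
  obtain ⟨z, hz, hdz⟩ := intermediate_value_uIcc hd hmemv
  obtain ⟨m, hm⟩ := hZ z hz
  rw [hm, hv] at hdz
  have hr : (2 * (m : ℝ) : ℝ) = 2 * (K : ℝ) - 1 := by
    nlinarith [hdz]
  have : (2 * m : ℤ) = 2 * K - 1 := by exact_mod_cast hr
  omega

/-- If `b` is within `|a|` of `a`, then `b/a` has positive real part. -/
lemma aux_halfplane (a b : ℂ) (ha : a ≠ 0) (h : ‖b - a‖ < ‖a‖) :
    0 < (b / a).re := by
  have ha' : 0 < ‖a‖ := norm_pos_iff.mpr ha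
  have h1 : ‖b / a - 1‖ < 1 := by
    have : b / a - 1 = (b - a) / a := by field_simp
    rw [this, norm_div, div_lt_one ha']
    exact h
  have h2 := Complex.abs_re_le_norm (b / a - 1)
  have h3 : (b / a - 1).re = (b / a).re - 1 := by simp
  rw [h3] at h2
  have := abs_lt.1 (lt_of_le_of_lt h2 h1)
  linarith

lemma aux_exp_eq (u v : ℝ) (h : Complex.exp (u * Complex.I) = Complex.exp (v * Complex.I)) :
    ∃ k : ℤ, u - v = 2 * Real.pi * k := by
  obtain ⟨n, hn⟩ := Complex.exp_eq_exp_iff_exists_int.1 h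
  refine ⟨n, ?_⟩
  have h2 : ((u : ℂ)) - v = 2 * (π : ℂ) * n := by
    linear_combination (-Complex.I) * hn +
      ((u : ℂ) - (v : ℂ) - 2 * (π : ℂ) * (n : ℂ)) * Complex.I_sq
  exact_mod_cast h2

/-- Two continuous argument-lifts of the same nonvanishing function differ by a constant. -/
lemma aux_compare (g : ℝ → ℂ) (u v : ℝ → ℝ) (x y : ℝ)
    (hu : ContinuousOn u (Set.uIcc x y)) (hv : ContinuousOn v (Set.uIcc x y))
    (hg : ∀ z ∈ Set.uIcc x y, g z ≠ 0)
    (hlu : ∀ z ∈ Set.uIcc x y, (‖g z‖ : ℂ) * Complex.exp (u z * Complex.I) = g z)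
    (hlv : ∀ z ∈ Set.uIcc x y, (‖g z‖ : ℂ) * Complex.exp (v z * Complex.I) = g z) :
    u x - v x = u y - v y := by
  have := aux_int (fun z => u z - v z) x y (hu.sub hv) (fun z hz => by
    have hne : ((‖g z‖ : ℂ)) ≠ 0 := by
      simpa using norm_ne_zero_iff.mpr (hg z hz)
    have hexp : Complex.exp (u z * Complex.I) = Complex.exp (v z * Complex.I) :=
      mul_left_cancel₀ hne ((hlu z hz).trans (hlv z hz).symm)
    exact aux_exp_eq _ _ hexp)
  simpa using this


lemma aux_formula (z B : ℂ) (hz : z ≠ 0) (hB : B ≠ 0) :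
    (‖z‖ : ℂ) * Complex.exp (↑(Complex.arg (z / B) - Complex.arg B⁻¹) * Complex.I)
      = z := by
  have hr : z / B ≠ 0 := div_ne_zero hz hB
  have habsr : (‖z / B‖ : ℂ) ≠ 0 := by simpa using norm_ne_zero_iff.mpr hr
  have habsB : (‖B⁻¹‖ : ℂ) ≠ 0 := by
    simpa using norm_ne_zero_iff.mpr (inv_ne_zero hB)
  have habsz : (‖z‖ : ℂ) ≠ 0 := by simpa using norm_ne_zero_iff.mpr hz
  have habsB' : (‖B‖ : ℂ) ≠ 0 := by simpa using norm_ne_zero_iff.mpr hB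
  have e1 : Complex.exp (Complex.arg (z / B) * Complex.I) = (z / B) / ↑(‖z / B‖) := by
    rw [eq_div_iff habsr, mul_comm]
    exact Complex.norm_mul_exp_arg_mul_I _
  have e2 : Complex.exp (Complex.arg B⁻¹ * Complex.I) = B⁻¹ / ↑(‖B⁻¹‖) := by
    rw [eq_div_iff habsB, mul_comm]
    exact Complex.norm_mul_exp_arg_mul_I _
  rw [Complex.ofReal_sub, sub_mul, Complex.exp_sub, e1, e2, norm_div, norm_inv]
  push_cast
  field_simp

lemma aux_formula2 (z B : ℂ) (x : ℝ) (hz : z ≠ 0) (hB : B ≠ 0) :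
    (‖z‖ : ℂ) * Complex.exp
        (↑(-x + (Complex.arg (z * Complex.exp (x * Complex.I) / B) - Complex.arg B⁻¹)) * Complex.I)
      = z := by
  have hE : Complex.exp ((x : ℂ) * Complex.I) ≠ 0 := Complex.exp_ne_zero _
  have habsE : ‖Complex.exp ((x : ℂ) * Complex.I)‖ = 1 :=
    Complex.norm_exp_ofReal_mul_I x
  have h := aux_formula (z * Complex.exp ((x : ℂ) * Complex.I)) B (mul_ne_zero hz hE) hB
  rw [norm_mul, habsE, mul_one] at h
  have hsplit : Complex.exp
        (↑(-x + (Complex.arg (z * Complex.exp (x * Complex.I) / B) - Complex.arg B⁻¹)) * Complex.I)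
      = Complex.exp (↑(-x) * Complex.I) *
        Complex.exp (↑(Complex.arg (z * Complex.exp (x * Complex.I) / B) - Complex.arg B⁻¹)
          * Complex.I) := by
    rw [← Complex.exp_add]
    congr 1
    push_cast
    ring
  rw [hsplit, ← mul_assoc, mul_comm ((‖z‖ : ℂ)) _, mul_assoc, h]
  have : (↑(-x) * Complex.I + ↑x * Complex.I : ℂ) = 0 := by push_cast; ring
  calc Complex.exp (↑(-x) * Complex.I) * (z * Complex.exp (↑x * Complex.I))
      = z * Complex.exp (↑(-x) * Complex.I + ↑x * Complex.I) := by rw [Complex.exp_add]; ring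
    _ = z := by rw [this, Complex.exp_zero, mul_one]


/-- Existence of a continuous argument-lift on a rectangle, for a continuous
nonvanishing function which is `1` on the bottom edge. -/
lemma aux_lift (g : ℝ × ℝ → ℂ) (hg_cont : Continuous g) (τt A : ℝ)
    (hτt : 0 < τt) (hA : 0 < A)
    (h0 : ∀ ω : ℝ, g (0, ω) = 1)
    (hne : ∀ p ∈ Set.Icc (0:ℝ) τt ×ˢ Set.Icc (-A) A, g p ≠ 0) :
    ∃ Θ : ℝ × ℝ → ℝ, Continuous Θ ∧ (∀ ω : ℝ, Θ (0, ω) = 0) ∧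
      ∀ p ∈ Set.Icc (0:ℝ) τt ×ˢ Set.Icc (-A) A,
        (‖g p‖ : ℂ) * Complex.exp (Θ p * Complex.I) = g p := by
  classical
  set K : Set (ℝ × ℝ) := Set.Icc (0:ℝ) τt ×ˢ Set.Icc (-A) A with hK
  have hKc : IsCompact K := isCompact_Icc.prod isCompact_Icc
  have hKne : K.Nonempty := ⟨(0, 0), ⟨⟨le_refl 0, hτt.le⟩, ⟨neg_nonpos.2 hA.le, hA.le⟩⟩⟩
  -- clamping functions
  set cI : ℝ → ℝ := fun t => max 0 (min t τt) with hcI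
  set cW : ℝ → ℝ := fun w => max (-A) (min w A) with hcW
  have hcI_mem : ∀ t, cI t ∈ Set.Icc (0:ℝ) τt :=
    fun t => ⟨le_max_left _ _, max_le hτt.le (min_le_right _ _)⟩
  have hcW_mem : ∀ w, cW w ∈ Set.Icc (-A) A :=
    fun w => ⟨le_max_left _ _, max_le (neg_le_self hA.le) (min_le_right _ _)⟩
  have hcI_id : ∀ t ∈ Set.Icc (0:ℝ) τt, cI t = t := fun t ht => by
    rw [hcI]; dsimp only; rw [min_eq_left ht.2, max_eq_right ht.1]
  have hcW_id : ∀ w ∈ Set.Icc (-A) A, cW w = w := fun w hw => by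
    rw [hcW]; dsimp only; rw [min_eq_left hw.2, max_eq_right hw.1]
  have hcI_zero : ∀ t : ℝ, t ≤ 0 → cI t = 0 := fun t ht => by
    rw [hcI]; dsimp only; rw [max_eq_left (le_trans (min_le_left _ _) ht)]
  have hcI_lip : LipschitzWith 1 cI := (LipschitzWith.id.min_const τt).const_max 0
  have hcI_cont : Continuous cI := hcI_lip.continuous
  have hcW_cont : Continuous cW := continuous_const.max (continuous_id.min continuous_const)
  -- the clamped function G
  set G : ℝ × ℝ → ℂ := fun p => g (cI p.1, cW p.2) with hG
  have hGK : ∀ p : ℝ × ℝ, (cI p.1, cW p.2) ∈ K := fun p => ⟨hcI_mem _, hcW_mem _⟩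
  have hGne : ∀ p : ℝ × ℝ, G p ≠ 0 := fun p => hne _ (hGK p)
  have hG_cont : Continuous G :=
    hg_cont.comp ((hcI_cont.comp continuous_fst).prodMk (hcW_cont.comp continuous_snd))
  have hG_id : ∀ p ∈ K, G p = g p := fun p hp => by
    rw [hG]; dsimp only; rw [hcI_id _ hp.1, hcW_id _ hp.2]
  -- the minimum of |g| on K
  obtain ⟨p₀, hp₀K, hp₀min₀⟩ :=
    hKc.exists_isMinOn hKne (continuous_norm.comp hg_cont).continuousOn
  have hp₀min := isMinOn_iff.1 hp₀min₀
  set δ : ℝ := ‖g p₀‖ with hδ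
  have hδpos : 0 < δ := norm_pos_iff.mpr (hne _ hp₀K)
  have hδle : ∀ p : ℝ × ℝ, δ ≤ ‖G p‖ := fun p => hp₀min _ (hGK p)
  -- uniform continuity
  obtain ⟨ε, hε, hmod⟩ :=
    Metric.uniformContinuousOn_iff.1 (hKc.uniformContinuousOn_of_continuous hg_cont.continuousOn)
      δ hδpos
  -- mesh size
  obtain ⟨n, hn⟩ := exists_nat_gt (τt / ε)
  have hn0 : 0 < (n : ℝ) := lt_trans (div_pos hτt hε) hn
  have hn0' : (n : ℕ) ≠ 0 := by exact_mod_cast hn0.ne'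
  have hmesh : τt / n < ε := by
    rw [div_lt_iff₀ hn0]
    rw [div_lt_iff₀ hε] at hn
    linarith
  -- grid points
  set t : ℕ → ℝ := fun k => k * (τt / n) with ht
  have ht0 : t 0 = 0 := by simp [ht]
  have htn : t n = τt := by
    rw [ht]; field_simp
  have htnonneg : ∀ k, 0 ≤ t k := fun k => by
    rw [ht]; positivity
  have htstep : ∀ k : ℕ, t (k + 1) - t k = τt / n := fun k => by
    rw [ht]; push_cast; ring
  -- uniform step estimate on G
  have hstep : ∀ s u ω : ℝ, |s - u| < ε → ‖G (s, ω) - G (u, ω)‖ < δ := by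
    intro s u ω hsu
    have h1 : dist (cI s, cW ω) (cI u, cW ω) < ε := by
      rw [Prod.dist_eq]
      refine max_lt ?_ (by simpa using hε)
      calc dist (cI s) (cI u) ≤ 1 * dist s u := hcI_lip.dist_le_mul s u
        _ = |s - u| := by rw [one_mul, Real.dist_eq]
        _ < ε := hsu
    have := hmod _ (hGK (s, ω)) _ (hGK (u, ω)) h1
    rwa [Complex.dist_eq] at this
  -- the ratios
  set R : ℕ → ℝ × ℝ → ℂ := fun k p => G (min p.1 (t (k + 1)), p.2) / G (min p.1 (t k), p.2)
    with hR
  have hRre : ∀ k (p : ℝ × ℝ), 0 < (R k p).re := by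
    intro k p
    refine aux_halfplane _ _ (hGne _) ?_
    have h1 : |min p.1 (t (k + 1)) - min p.1 (t k)| < ε := by
      have : dist (min p.1 (t (k + 1))) (min p.1 (t k)) ≤ 1 * dist (t (k + 1)) (t k) :=
        (LipschitzWith.id.const_min p.1).dist_le_mul _ _
      rw [one_mul, Real.dist_eq, Real.dist_eq] at this
      refine lt_of_le_of_lt this ?_
      have heq : |t (k + 1) - t k| = τt / n := by
        rw [htstep k]; exact _root_.abs_of_nonneg (by positivity)
      rw [heq]; exact hmesh
    exact lt_of_lt_of_le (hstep _ _ _ h1) (hδle _)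
  have hRne : ∀ k (p : ℝ × ℝ), R k p ≠ 0 := fun k p => by
    intro h
    have := hRre k p
    rw [h] at this
    simpa using this
  -- the lift
  set Θ : ℝ × ℝ → ℝ := fun p => ∑ k ∈ Finset.range n, Complex.arg (R k p) with hΘ
  have hRcont : ∀ k, Continuous fun p => R k p := by
    intro k
    apply Continuous.div
    · exact hG_cont.comp (((continuous_fst.min continuous_const)).prodMk continuous_snd)
    · exact hG_cont.comp (((continuous_fst.min continuous_const)).prodMk continuous_snd)
    · exact fun p => hGne _
  have hΘcont : Continuous Θ := by
    apply continuous_finset_sum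
    intro k _
    rw [continuous_iff_continuousAt]
    intro p
    exact (Complex.continuousAt_arg (Complex.mem_slitPlane_iff.2 (Or.inl (hRre k p)))).comp
      (hRcont k).continuousAt
  -- partial sum identity
  have hind : ∀ m : ℕ, ∀ p : ℝ × ℝ,
      (‖G (min p.1 (t m), p.2)‖ : ℂ) *
        Complex.exp ((∑ k ∈ Finset.range m, Complex.arg (R k p) : ℝ) * Complex.I)
        = G (min p.1 (t m), p.2) := by
    intro m
    induction m with
    | zero =>
      intro p
      have hmin : cI (min p.1 (t 0)) = 0 := hcI_zero _ (by rw [ht0]; exact min_le_right _ _)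
      have : G (min p.1 (t 0), p.2) = 1 := by
        rw [hG]; dsimp only; rw [hmin, h0]
      rw [this]
      simp
    | succ m ih =>
      intro p
      set a : ℂ := G (min p.1 (t m), p.2) with ha
      set b : ℂ := G (min p.1 (t (m + 1)), p.2) with hb
      have hane : a ≠ 0 := hGne _
      have hbne : b ≠ 0 := hGne _
      have haabs : (‖a‖ : ℂ) ≠ 0 := by simpa using norm_ne_zero_iff.mpr hane
      have hbabs : (‖b‖ : ℂ) ≠ 0 := by simpa using norm_ne_zero_iff.mpr hbne
      have hRm : R m p = b / a := rfl
      have hRabs : (‖R m p‖ : ℂ) ≠ 0 := by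
        simpa using norm_ne_zero_iff.mpr (hRne m p)
      have hexparg : Complex.exp (Complex.arg (R m p) * Complex.I)
          = R m p / (‖R m p‖ : ℂ) := by
        rw [eq_div_iff hRabs, mul_comm]
        exact Complex.norm_mul_exp_arg_mul_I _
      have hsum : (∑ k ∈ Finset.range (m + 1), Complex.arg (R k p) : ℝ)
          = (∑ k ∈ Finset.range m, Complex.arg (R k p) : ℝ) + Complex.arg (R m p) :=
        Finset.sum_range_succ _ _
      have ih' := ih p
      rw [← ha] at ih'
      have hexpS : Complex.exp ((∑ k ∈ Finset.range m, Complex.arg (R k p) : ℝ) * Complex.I)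
          = a / (‖a‖ : ℂ) := by
        rw [eq_div_iff haabs]
        linear_combination ih'
      rw [hsum, Complex.ofReal_add, add_mul, Complex.exp_add, hexparg, hexpS, hRm,
        norm_div]
      field_simp
      push_cast
      field_simp
  refine ⟨Θ, hΘcont, ?_, ?_⟩
  · intro ω
    rw [hΘ]; dsimp only
    apply Finset.sum_eq_zero
    intro k _
    have h1 : min (0:ℝ) (t (k+1)) = 0 := min_eq_left (htnonneg _)
    have h2 : min (0:ℝ) (t k) = 0 := min_eq_left (htnonneg _)
    rw [hR]; dsimp only
    rw [h1, h2, div_self (hGne _), Complex.arg_one]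
  · intro p hp
    have h1 := hind n p
    have h2 : min p.1 (t n) = p.1 := by rw [htn]; exact min_eq_left hp.1.2
    rw [h2] at h1
    rw [← hG_id p hp]
    exact h1


set_option maxHeartbeats 1000000 in
/-- Homotopy argument: let `f(τ, ω) = T(iω)(e^{-iτω} - 1)` be continuous with
`f(0, ω) = 0` for all `ω`. Suppose the curve `ω ↦ f(τ̃, ω)` avoids `-1` and has
winding number at least `1` around `-1`, in the sense that there is a
continuous argument lift `θ` with `f(τ̃, ω) + 1 = |f(τ̃, ω) + 1| e^{iθ(ω)}`
having limits `L₋`, `L₊` at `∓∞` with `L₊ - L₋ ≥ 2π`. Then there exist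
`τ ∈ (0, τ̃)` and `ω ∈ ℝ` with `f(τ, ω) = -1`. -/
theorem stmt13 (T : ℂ → ℂ) (τt : ℝ) (hτt : 0 < τt) (f : ℝ × ℝ → ℂ)
    (hf_def : ∀ τ ω : ℝ,
      f (τ, ω) = T ((ω : ℂ) * Complex.I) * (Complex.exp (-((τ * ω : ℝ) : ℂ) * Complex.I) - 1))
    (hf_cont : Continuous f)
    (hf_zero : ∀ ω : ℝ, f (0, ω) = 0)
    (havoid : ∀ ω : ℝ, f (τt, ω) ≠ -1)
    (θ : ℝ → ℝ) (hθ_cont : Continuous θ)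
    (hθ_lift : ∀ ω : ℝ,
      f (τt, ω) + 1
        = (‖f (τt, ω) + 1‖ : ℂ) * Complex.exp ((θ ω : ℂ) * Complex.I))
    (Lp Lm : ℝ)
    (hLp : Filter.Tendsto θ Filter.atTop (nhds Lp))
    (hLm : Filter.Tendsto θ Filter.atBot (nhds Lm))
    (hwind : 2 * Real.pi ≤ Lp - Lm) :
    ∃ τ ∈ Set.Ioo 0 τt, ∃ ω : ℝ, f (τ, ω) = -1 := by
  by_contra hcon
  push_neg at hcon
  have hπ := Real.pi_pos
  set P : ℝ := 2 * Real.pi / τt with hP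
  have hPpos : 0 < P := by positivity
  set g : ℝ × ℝ → ℂ := fun p => f p + 1 with hg
  have hg_cont : Continuous g := hf_cont.add continuous_const
  have hg0 : ∀ ω : ℝ, g (0, ω) = 1 := fun ω => by rw [hg]; dsimp only; rw [hf_zero]; ring
  have hgne : ∀ τ ∈ Set.Icc (0:ℝ) τt, ∀ ω : ℝ, g (τ, ω) ≠ 0 := by
    intro τ hτ ω
    rw [hg]; dsimp only
    rcases eq_or_lt_of_le hτ.1 with h0 | h0
    · rw [← h0, hf_zero]; norm_num
    rcases eq_or_lt_of_le hτ.2 with h1 | h1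
    · rw [h1]
      intro h
      exact havoid ω (by linear_combination h)
    · intro h
      exact hcon τ ⟨h0, h1⟩ ω (by linear_combination h)
  -- the key computation : for every integer j, θ (j * P) - θ 0 ∈ {0, -2πj}
  have key : ∀ j : ℤ, θ (j * P) - θ 0 = 0 ∨ θ (j * P) - θ 0 = -(2 * Real.pi * j) := by
    intro j
    rcases eq_or_ne j 0 with rfl | hj
    · left; simp
    set A : ℝ := |(j : ℝ)| * P with hA
    have hjabs : (1:ℝ) ≤ |(j:ℝ)| := by
      have h1 : (1:ℤ) ≤ |j| := Int.one_le_abs hj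
      have h2 : ((|j| : ℤ) : ℝ) = |(j:ℝ)| := by push_cast; ring
      rw [← h2]; exact_mod_cast h1
    have hApos : 0 < A := by
      rw [hA]; nlinarith
    obtain ⟨Θ, hΘcont, hΘ0, hΘlift⟩ := aux_lift g hg_cont τt A hτt hApos hg0
      (fun p hp => by
        have := hgne p.1 hp.1 p.2
        simpa using this)
    set ω₀ : ℝ := j * P with hω₀
    have hω₀abs : |ω₀| = A := by
      rw [hω₀, hA, abs_mul, abs_of_pos hPpos]
    have hω₀K : ω₀ ∈ Set.Icc (-A) A := by
      constructor
      · rw [← hω₀abs]; exact neg_abs_le _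
      · rw [← hω₀abs]; exact le_abs_self _
    set c : ℂ := T (ω₀ * Complex.I) with hc
    have hfv : ∀ τ : ℝ, f (τ, ω₀) = c * (Complex.exp (-(↑(τ * ω₀)) * Complex.I) - 1) :=
      fun τ => hf_def τ ω₀
    have hτtω₀ : τt * ω₀ = 2 * Real.pi * j := by
      rw [hω₀, hP]; field_simp
    have hEτt : Complex.exp (-(↑(τt * ω₀)) * Complex.I) = 1 := by
      have h1 : (-(↑(τt * ω₀)) * Complex.I : ℂ) = ((-j : ℤ) : ℂ) * (2 * (Real.pi:ℂ) * Complex.I) := by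
        rw [hτtω₀]; push_cast; ring
      rw [h1, Complex.exp_int_mul_two_pi_mul_I]
    have hEτt' : Complex.exp ((↑(τt * ω₀)) * Complex.I) = 1 := by
      have h1 : ((↑(τt * ω₀)) * Complex.I : ℂ) = ((j : ℤ) : ℂ) * (2 * (Real.pi:ℂ) * Complex.I) := by
        rw [hτtω₀]; push_cast; ring
      rw [h1, Complex.exp_int_mul_two_pi_mul_I]
    set gv : ℝ → ℂ := fun τ => f (τ, ω₀) + 1 with hgv
    have hgv_cont : Continuous gv :=
      (hf_cont.comp (continuous_id.prodMk continuous_const)).add continuous_const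
    have hgv_ne : ∀ τ ∈ Set.Icc (0:ℝ) τt, gv τ ≠ 0 := fun τ hτ => by
      have := hgne τ hτ ω₀; simpa using this
    have hgv0 : gv 0 = 1 := by rw [hgv]; dsimp only; rw [hf_zero]; ring
    have hgvτt : gv τt = 1 := by
      rw [hgv]; dsimp only; rw [hfv, hEτt]; ring
    have huIccτ : Set.uIcc (0:ℝ) τt = Set.Icc 0 τt := Set.uIcc_of_le hτt.le
    have hΘv : ∀ τ ∈ Set.Icc (0:ℝ) τt,
        (‖gv τ‖ : ℂ) * Complex.exp (Θ (τ, ω₀) * Complex.I) = gv τ := by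
      intro τ hτ
      have := hΘlift (τ, ω₀) ⟨hτ, hω₀K⟩
      simpa using this
    -- Θ (τt, 0) = 0
    have hΘτt0 : Θ (τt, 0) = 0 := by
      have h0K : (0:ℝ) ∈ Set.Icc (-A) A := ⟨neg_nonpos.2 hApos.le, hApos.le⟩
      have hgz : ∀ τ : ℝ, g (τ, 0) = 1 := by
        intro τ
        rw [hg]; dsimp only; rw [hf_def]
        norm_num
      have hcomp := aux_compare (fun _ => (1:ℂ)) (fun τ => Θ (τ, 0)) (fun _ => 0) 0 τt
        ((hΘcont.comp (continuous_id.prodMk continuous_const)).continuousOn)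
        continuousOn_const
        (fun z _ => one_ne_zero)
        (fun z hz => by
          have := hΘlift (z, 0) ⟨by rwa [huIccτ] at hz, h0K⟩
          rw [hgz z] at this
          simpa using this)
        (fun z _ => by simp)
      simp only [sub_zero] at hcomp
      rw [hΘ0 0] at hcomp
      exact hcomp.symm
    -- horizontal comparison
    have hAIcc : Set.uIcc (-A) A = Set.Icc (-A) A := Set.uIcc_of_le (by linarith)
    have hhor : Θ (τt, ω₀) - θ ω₀ = Θ (τt, 0) - θ 0 := by
      have hsub : Set.uIcc ω₀ 0 ⊆ Set.Icc (-A) A := by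
        rw [← hAIcc]
        exact Set.uIcc_subset_uIcc (by rw [hAIcc]; exact hω₀K)
          (by rw [hAIcc]; exact ⟨neg_nonpos.2 hApos.le, hApos.le⟩)
      exact aux_compare (fun ω => f (τt, ω) + 1) (fun ω => Θ (τt, ω)) θ ω₀ 0
        ((hΘcont.comp (continuous_const.prodMk continuous_id)).continuousOn)
        hθ_cont.continuousOn
        (fun z _ => fun h => havoid z (by linear_combination h))
        (fun z hz => by
          have := hΘlift (τt, z) ⟨⟨hτt.le, le_refl _⟩, hsub hz⟩
          simpa using this)
        (fun z _ => (hθ_lift z).symm)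
    -- the three cases
    rcases lt_trichotomy c.re (1/2) with hltc | heqc | hgtc
    · -- Θ (τt, ω₀) = 0
      have hval : Θ (τt, ω₀) = 0 := by
        set A₀ : ℂ := 1 - c with hA₀def
        have habs2 : ‖c‖ < ‖A₀‖ := by
          have h1 : (‖c‖)^2 < (‖A₀‖)^2 := by
            rw [Complex.sq_norm, Complex.sq_norm, hA₀def]
            simp only [Complex.normSq_apply, Complex.sub_re, Complex.sub_im, Complex.one_re,
              Complex.one_im]
            nlinarith
          exact lt_of_pow_lt_pow_left₀ 2 (norm_nonneg _) h1
        have hA₀ne : A₀ ≠ 0 := by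
          intro h
          rw [h] at habs2
          simp at habs2
          exact absurd habs2 (not_lt.2 (norm_nonneg _))
        set μ : ℝ → ℝ := fun τ => Complex.arg (gv τ / A₀) - Complex.arg (A₀⁻¹) with hμ
        have hgvA : ∀ τ : ℝ, gv τ - A₀ = c * Complex.exp (-(↑(τ * ω₀)) * Complex.I) := by
          intro τ
          rw [hgv]; dsimp only; rw [hfv, hA₀def]; ring
        have habsdiff : ∀ τ : ℝ, ‖gv τ - A₀‖ < ‖A₀‖ := by
          intro τ
          rw [hgvA, norm_mul]
          have hE1 : ‖Complex.exp (-(↑(τ * ω₀)) * Complex.I)‖ = 1 := by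
            have h2 : (-(↑(τ * ω₀)) * Complex.I : ℂ) = ↑(-(τ * ω₀)) * Complex.I := by
              push_cast; ring
            rw [h2, Complex.norm_exp_ofReal_mul_I]
          rw [hE1, mul_one]
          exact habs2
        have hrepos : ∀ τ : ℝ, 0 < (gv τ / A₀).re :=
          fun τ => aux_halfplane A₀ (gv τ) hA₀ne (habsdiff τ)
        have hratio_cont : Continuous fun τ => gv τ / A₀ := hgv_cont.div_const _
        have hμcont : Continuous μ := by
          apply Continuous.sub _ continuous_const
          rw [continuous_iff_continuousAt]
          intro τ
          exact ContinuousAt.comp (f := fun τ => gv τ / A₀) (x := τ)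
            (Complex.continuousAt_arg (Complex.mem_slitPlane_iff.2 (Or.inl (hrepos τ))))
            hratio_cont.continuousAt
        have hgvne' : ∀ τ : ℝ, gv τ ≠ 0 := by
          intro τ h
          have := hrepos τ
          rw [h, zero_div] at this
          simp at this
        have hμlift : ∀ τ : ℝ,
            (‖gv τ‖ : ℂ) * Complex.exp (μ τ * Complex.I) = gv τ := by
          intro τ
          exact aux_formula (gv τ) A₀ (hgvne' τ) hA₀ne
        have hcomp := aux_compare gv (fun τ => Θ (τ, ω₀)) μ 0 τt
          ((hΘcont.comp (continuous_id.prodMk continuous_const)).continuousOn)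
          hμcont.continuousOn
          (fun z hz => hgv_ne z (by rwa [huIccτ] at hz))
          (fun z hz => hΘv z (by rwa [huIccτ] at hz))
          (fun z _ => hμlift z)
        have hμ0 : μ 0 = 0 := by
          rw [hμ]; dsimp only; rw [hgv0, one_div, sub_self]
        have hμτt : μ τt = 0 := by
          rw [hμ]; dsimp only; rw [hgvτt, one_div, sub_self]
        rw [hΘ0 ω₀, hμ0, hμτt] at hcomp
        linarith
      left
      rw [hΘτt0, hval] at hhor
      linarith
    · -- contradiction: a root exists on this vertical line
      exfalso
      have hc0 : c ≠ 0 := by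
        intro h
        rw [h] at heqc
        norm_num at heqc
      set w : ℂ := (c - 1) / c with hw
      have hw1 : w ≠ 1 := by
        intro h
        rw [hw, div_eq_iff hc0, one_mul] at h
        have h2 := sub_eq_self.1 h
        simpa using h2
      have habsw : ‖w‖ = 1 := by
        rw [hw, norm_div]
        have h1 : ‖c - 1‖ = ‖c‖ := by
          have h2 : Complex.normSq (c - 1) = Complex.normSq c := by
            simp only [Complex.normSq_apply, Complex.sub_re, Complex.sub_im, Complex.one_re,
              Complex.one_im]
            nlinarith
          rw [Complex.norm_def, Complex.norm_def, h2]
        rw [h1, div_self (norm_ne_zero_iff.mpr hc0)]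
      set a : ℝ := Complex.arg w with ha
      have hane : a ≠ 0 := by
        intro h
        apply hw1
        have h2 := Complex.arg_eq_zero_iff.1 h
        have h3 : w = ((w.re : ℝ) : ℂ) := Complex.ext (Complex.ofReal_re _).symm (by rw [Complex.ofReal_im, h2.2])
        have h4 : ‖w‖ = w.re := by
          rw [h3, Complex.norm_real, Real.norm_eq_abs, _root_.abs_of_nonneg h2.1, Complex.ofReal_re]

        rw [h3, ← h4, habsw]
        norm_num
      have haw : Complex.exp (↑a * Complex.I) = w := by
        have h1 := Complex.norm_mul_exp_arg_mul_I w
        rw [habsw] at h1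
        simpa [ha] using h1
      have hroot : ∀ τ : ℝ, Complex.exp (-(↑(τ * ω₀)) * Complex.I) = w → f (τ, ω₀) = -1 := by
        intro τ hτ
        rw [hfv, hτ, hw]
        field_simp
        ring
      have hπa1 := Complex.neg_pi_lt_arg w
      have hπa2 := Complex.arg_le_pi w
      rw [← ha] at hπa1 hπa2
      have hjlast : ∃ τ ∈ Set.Ioo (0:ℝ) τt,
          Complex.exp (-(↑(τ * ω₀)) * Complex.I) = w := by
        rcases hj.lt_or_gt with hjneg | hjpos
        · -- j < 0, ω₀ < 0
          have hjR : (j : ℝ) ≤ -1 := by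
            have h9 : j ≤ -1 := by omega
            exact_mod_cast h9
          have hω₀neg : ω₀ < 0 := by
            rw [hω₀]; nlinarith
          rcases hane.lt_or_gt with haneg | hapos
          · -- a < 0 : τ := (a + 2π) / (-ω₀)
            refine ⟨(a + 2 * Real.pi) / (-ω₀), ⟨div_pos (by linarith) (by linarith), ?_⟩, ?_⟩
            · rw [div_lt_iff₀ (by linarith)]
              nlinarith
            · have hτω : ((a + 2 * Real.pi) / (-ω₀)) * ω₀ = -(a + 2 * Real.pi) := by
                rw [div_mul_eq_mul_div, div_eq_iff (show -ω₀ ≠ 0 by linarith)]; ring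
              rw [hτω]
              have h1 : (-(↑(-(a + 2 * Real.pi))) * Complex.I : ℂ)
                  = ↑a * Complex.I + ((1 : ℤ) : ℂ) * (2 * (Real.pi : ℂ) * Complex.I) := by
                push_cast; ring
              rw [h1, Complex.exp_add, Complex.exp_int_mul_two_pi_mul_I, mul_one, haw]
          · -- a > 0 : τ := a / (-ω₀)
            refine ⟨a / (-ω₀), ⟨div_pos (by linarith) (by linarith), ?_⟩, ?_⟩
            · rw [div_lt_iff₀ (by linarith)]
              nlinarith
            · have hτω : (a / (-ω₀)) * ω₀ = -a := by
                rw [div_mul_eq_mul_div, div_eq_iff (show -ω₀ ≠ 0 by linarith)]; ring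
              rw [hτω]
              have h1 : (-(↑(-a)) * Complex.I : ℂ) = ↑a * Complex.I := by push_cast; ring
              rw [h1, haw]
        · -- j > 0, ω₀ > 0
          have hjR : (1 : ℝ) ≤ (j : ℝ) := by exact_mod_cast hjpos
          have hω₀pos : 0 < ω₀ := by
            rw [hω₀]; nlinarith
          rcases hane.lt_or_gt with haneg | hapos
          · -- a < 0 : τ := (-a) / ω₀
            refine ⟨(-a) / ω₀, ⟨div_pos (by linarith) (by linarith), ?_⟩, ?_⟩
            · rw [div_lt_iff₀ hω₀pos]
              nlinarith
            · have hτω : ((-a) / ω₀) * ω₀ = -a := by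
                rw [div_mul_eq_mul_div, div_eq_iff (show ω₀ ≠ 0 by linarith)]
              rw [hτω]
              have h1 : (-(↑(-a)) * Complex.I : ℂ) = ↑a * Complex.I := by push_cast; ring
              rw [h1, haw]
          · -- a > 0 : τ := (2π - a) / ω₀
            refine ⟨(2 * Real.pi - a) / ω₀, ⟨div_pos (by linarith) (by linarith), ?_⟩, ?_⟩
            · rw [div_lt_iff₀ hω₀pos]
              nlinarith
            · have hτω : ((2 * Real.pi - a) / ω₀) * ω₀ = 2 * Real.pi - a := by
                rw [div_mul_eq_mul_div, div_eq_iff (show ω₀ ≠ 0 by linarith)]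
              rw [hτω]
              have h1 : (-(↑(2 * Real.pi - a)) * Complex.I : ℂ)
                  = ↑a * Complex.I + ((-1 : ℤ) : ℂ) * (2 * (Real.pi : ℂ) * Complex.I) := by
                push_cast; ring
              rw [h1, Complex.exp_add, Complex.exp_int_mul_two_pi_mul_I, mul_one, haw]
      obtain ⟨τ, hτIoo, hτexp⟩ := hjlast
      exact hcon τ hτIoo ω₀ (hroot τ hτexp)
    · -- Θ (τt, ω₀) = -(2πj)
      have hval : Θ (τt, ω₀) = -(2 * Real.pi * j) := by
        set A₀ : ℂ := 1 - c with hA₀def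
        have hc0 : c ≠ 0 := by
          intro h
          rw [h] at hgtc
          norm_num at hgtc
        have habs2 : ‖A₀‖ < ‖c‖ := by
          have h1 : (‖A₀‖)^2 < (‖c‖)^2 := by
            rw [Complex.sq_norm, Complex.sq_norm, hA₀def]
            simp only [Complex.normSq_apply, Complex.sub_re, Complex.sub_im, Complex.one_re,
              Complex.one_im]
            nlinarith
          exact lt_of_pow_lt_pow_left₀ 2 (norm_nonneg _) h1
        set Hv : ℝ → ℂ := fun τ => gv τ * Complex.exp (↑(τ * ω₀) * Complex.I) with hHvdef
        have hHvc : ∀ τ : ℝ, Hv τ - c = A₀ * Complex.exp (↑(τ * ω₀) * Complex.I) := by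
          intro τ
          have hEE : Complex.exp (-(↑(τ * ω₀)) * Complex.I) *
              Complex.exp (↑(τ * ω₀) * Complex.I) = 1 := by
            rw [← Complex.exp_add]
            have h0 : (-(↑(τ * ω₀)) * Complex.I + ↑(τ * ω₀) * Complex.I : ℂ) = 0 := by ring
            rw [h0, Complex.exp_zero]
          rw [hHvdef]; dsimp only
          rw [hgv]; dsimp only
          rw [hfv, hA₀def]
          linear_combination c * hEE
        have habsdiff : ∀ τ : ℝ, ‖Hv τ - c‖ < ‖c‖ := by
          intro τ
          rw [hHvc, norm_mul, Complex.norm_exp_ofReal_mul_I, mul_one]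
          exact habs2
        have hrepos : ∀ τ : ℝ, 0 < (Hv τ / c).re :=
          fun τ => aux_halfplane c (Hv τ) hc0 (habsdiff τ)
        have hgvne' : ∀ τ : ℝ, gv τ ≠ 0 := by
          intro τ h
          have h2 := hrepos τ
          rw [hHvdef] at h2
          dsimp only at h2
          rw [h, zero_mul, zero_div] at h2
          simp at h2
        have hHcont : Continuous fun τ : ℝ => Hv τ / c :=
          (hgv_cont.mul (Complex.continuous_exp.comp
            ((Complex.continuous_ofReal.comp (continuous_id.mul continuous_const)).mul
              continuous_const))).div_const _
        set μ : ℝ → ℝ := fun τ => -(τ * ω₀) +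
          (Complex.arg (Hv τ / c) - Complex.arg c⁻¹) with hμ
        have hμcont : Continuous μ := by
          apply Continuous.add
          · exact (continuous_id.mul continuous_const).neg
          apply Continuous.sub _ continuous_const
          rw [continuous_iff_continuousAt]
          intro τ
          exact ContinuousAt.comp (f := fun τ => Hv τ / c) (x := τ)
            (Complex.continuousAt_arg (Complex.mem_slitPlane_iff.2 (Or.inl (hrepos τ))))
            hHcont.continuousAt
        have hμlift : ∀ τ : ℝ,
            (‖gv τ‖ : ℂ) * Complex.exp (μ τ * Complex.I) = gv τ := by
          intro τ
          exact aux_formula2 (gv τ) c (τ * ω₀) (hgvne' τ) hc0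
        have hcomp := aux_compare gv (fun τ => Θ (τ, ω₀)) μ 0 τt
          ((hΘcont.comp (continuous_id.prodMk continuous_const)).continuousOn)
          hμcont.continuousOn
          (fun z hz => hgv_ne z (by rwa [huIccτ] at hz))
          (fun z hz => hΘv z (by rwa [huIccτ] at hz))
          (fun z _ => hμlift z)
        have hμ0 : μ 0 = 0 := by
          have h1 : Hv 0 = 1 := by
            rw [hHvdef]; dsimp only
            rw [hgv0]
            norm_num
          rw [hμ]; dsimp only
          rw [h1, one_div, sub_self]
          norm_num
        have hμτt : μ τt = -(2 * Real.pi * j) := by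
          have h1 : Hv τt = 1 := by
            rw [hHvdef]; dsimp only
            rw [hgvτt, hEτt', one_mul]
          rw [hμ]; dsimp only
          rw [h1, one_div, sub_self, add_zero, hτtω₀]
        rw [hΘ0 ω₀, hμ0, hμτt] at hcomp
        linarith
      right
      rw [hΘτt0, hval] at hhor
      linarith
  -- conclude : Lp = θ 0 and Lm = θ 0
  have hLp' : Lp = θ 0 := by
    have hseq : Tendsto (fun m : ℕ => ((m : ℝ) + 1) * P) atTop atTop :=
      Tendsto.atTop_mul_const hPpos
        (tendsto_atTop_add_const_right _ 1 tendsto_natCast_atTop_atTop)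
    have htend : Tendsto (fun m : ℕ => θ ((m + 1 : ℤ) * P)) atTop (nhds Lp) := by
      have := hLp.comp hseq
      apply this.congr
      intro m
      show θ ((↑m + 1) * P) = θ (↑(m + 1 : ℤ) * P)
      norm_num
    have hev : ∀ᶠ m : ℕ in atTop, θ ((m + 1 : ℤ) * P) = θ 0 := by
      have h1 : ∀ᶠ m : ℕ in atTop, |θ ((m + 1 : ℤ) * P) - Lp| < 1 := by
        have := Metric.tendsto_nhds.1 htend 1 one_pos
        simpa [Real.dist_eq] using this
      have h2 : ∀ᶠ m : ℕ in atTop, |θ 0| + |Lp| + 1 < 2 * Real.pi * (m + 1) := by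
        have : Tendsto (fun m : ℕ => 2 * Real.pi * ((m : ℝ) + 1)) atTop atTop := by
          apply Tendsto.const_mul_atTop (by positivity)
          exact tendsto_atTop_add_const_right _ _ tendsto_natCast_atTop_atTop
        exact this.eventually_gt_atTop _
      filter_upwards [h1, h2] with m hm1 hm2
      rcases key (m + 1) with h | h
      · push_cast at h ⊢; linarith
      · exfalso
        push_cast at h hm1 hm2
        have ha1 := abs_lt.1 hm1
        have ha2 := le_abs_self (θ 0)
        have ha3 := le_abs_self Lp
        have ha4 := neg_abs_le Lp
        linarith [ha1.1, ha1.2]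
    exact tendsto_nhds_unique (htend.congr' (hev.mono fun m hm => hm)) tendsto_const_nhds
  have hLm' : Lm = θ 0 := by
    have hseq : Tendsto (fun m : ℕ => ((m : ℝ) + 1) * P) atTop atTop :=
      Tendsto.atTop_mul_const hPpos
        (tendsto_atTop_add_const_right _ 1 tendsto_natCast_atTop_atTop)
    have hseq' : Tendsto (fun m : ℕ => (-((m : ℝ) + 1)) * P) atTop atBot := by
      have := tendsto_neg_atTop_atBot.comp hseq
      apply this.congr
      intro m
      show -(((m : ℝ) + 1) * P) = -((m : ℝ) + 1) * P
      ring
    have htend : Tendsto (fun m : ℕ => θ ((-(m + 1) : ℤ) * P)) atTop (nhds Lm) := by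
      have := hLm.comp hseq'
      apply this.congr
      intro m
      show θ (-((m : ℝ) + 1) * P) = θ (↑(-(m + 1) : ℤ) * P)
      norm_num
    have hev : ∀ᶠ m : ℕ in atTop, θ ((-(m + 1) : ℤ) * P) = θ 0 := by
      have h1 : ∀ᶠ m : ℕ in atTop, |θ ((-(m + 1) : ℤ) * P) - Lm| < 1 := by
        have := Metric.tendsto_nhds.1 htend 1 one_pos
        simpa [Real.dist_eq] using this
      have h2 : ∀ᶠ m : ℕ in atTop, |θ 0| + |Lm| + 1 < 2 * Real.pi * (m + 1) := by
        have : Tendsto (fun m : ℕ => 2 * Real.pi * ((m : ℝ) + 1)) atTop atTop := by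
          apply Tendsto.const_mul_atTop (by positivity)
          exact tendsto_atTop_add_const_right _ _ tendsto_natCast_atTop_atTop
        exact this.eventually_gt_atTop _
      filter_upwards [h1, h2] with m hm1 hm2
      rcases key (-(m + 1)) with h | h
      · push_cast at h ⊢; linarith
      · exfalso
        push_cast at h hm1 hm2
        have ha1 := abs_lt.1 hm1
        have ha2 := neg_abs_le (θ 0)
        have ha3 := le_abs_self Lm
        have ha4 := neg_abs_le Lm
        linarith [ha1.1, ha1.2]
    exact tendsto_nhds_unique (htend.congr' (hev.mono fun m hm => hm)) tendsto_const_nhds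
  rw [hLp', hLm'] at hwind
  simp at hwind
  linarith
end

section
/- Let T₀ : ℝ → ℂ be continuous with sup_ω |Im T₀(iω)| =: η < ∞ on [-M, M] and Re(T₀(iω)) ≤ 1/2 - ε for |ω| ≥ M (ε > 0, M > 0). Then for any τ̄ with 0 < τ̄ ≤ (2/M)·arccot(2η + 2ε), the distance from T₀(iω) to the cut C(ωτ̄) is at least ε for all ω ∈ ℝ, where C(φ) is the cut defined by C(φ) = {1/2 + (i/2)t : t ≤ -cot(φ/2)} for 0 < φ < 2π, C(-φ) its reflection, C(0) = ∅, and C(φ) = {z : Re z = 1/2} for |φ| ≥ 2π. -/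
open Complex Real Set

/-- The frequency-dependent cut `C(φ)` in the range of the complementary
sensitivity function: empty for `φ = 0`, the half-line
`{1/2 + (i/2)t : t ≤ -cot(φ/2)}` for `0 < φ < 2π` (its reflection for
`-2π < φ < 0`), and the full line `Re z = 1/2` for `|φ| ≥ 2π`. -/
noncomputable def Cut (φ : ℝ) : Set ℂ :=
  if φ = 0 then ∅
  else if 2 * Real.pi ≤ |φ| then {z : ℂ | z.re = 1 / 2}
  else if 0 < φ then
    {z : ℂ | ∃ t : ℝ, t ≤ -Real.cot (φ / 2) ∧ z = 1 / 2 + (t / 2 : ℝ) * Complex.I}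
  else
    {z : ℂ | ∃ t : ℝ, -Real.cot (φ / 2) ≤ t ∧ z = 1 / 2 + (t / 2 : ℝ) * Complex.I}

lemma cot_inv_tan (x : ℝ) : Real.cot x = (Real.tan x)⁻¹ := by
  rw [Real.cot_eq_cos_div_sin, Real.tan_eq_sin_div_cos, inv_div]

lemma cot_lb {x c : ℝ} (hx : 0 < x) (hc : 0 < c)
    (h : x < Real.pi / 2 - Real.arctan c) : c < Real.cot x := by
  have harc : 0 < Real.arctan c := by simpa using Real.arctan_strictMono hc
  have h2 : x < Real.pi / 2 := by linarith
  have htanlt : Real.tan x < Real.tan (Real.pi / 2 - Real.arctan c) :=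
    Real.tan_lt_tan_of_nonneg_of_lt_pi_div_two hx.le (by linarith) h
  rw [Real.tan_pi_div_two_sub, Real.tan_arctan] at htanlt
  have htanpos : 0 < Real.tan x := Real.tan_pos_of_pos_of_lt_pi_div_two hx h2
  rw [cot_inv_tan]
  calc c = (c⁻¹)⁻¹ := (inv_inv c).symm
    _ < (Real.tan x)⁻¹ := by
        apply inv_strictAnti₀ htanpos htanlt

/-- If `T₀` is continuous with `|Im T₀(iω)| ≤ η` on `[-M, M]` and
`Re T₀(iω) ≤ 1/2 - ε` for `|ω| ≥ M`, then for any
`0 < τ̄ ≤ (2/M)·arccot(2η + 2ε)` the distance from `T₀(iω)` to the cut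
`C(ωτ̄)` is at least `ε` for all `ω`. Here `arccot x = π/2 - arctan x`. -/
theorem stmt14 (T₀ : ℝ → ℂ) (hT₀ : Continuous T₀) (M ε η : ℝ) (hM : 0 < M)
    (hε : 0 < ε)
    (him : ∀ ω ∈ Set.Icc (-M) M, |(T₀ ω).im| ≤ η)
    (hre : ∀ ω : ℝ, M ≤ |ω| → (T₀ ω).re ≤ 1 / 2 - ε)
    (τb : ℝ) (hτb : 0 < τb)
    (hτb' : τb ≤ (2 / M) * (Real.pi / 2 - Real.arctan (2 * η + 2 * ε))) :
    ∀ ω : ℝ, ENNReal.ofReal ε ≤ EMetric.infEdist (T₀ ω) (Cut (ω * τb)) := by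
  have hη : 0 ≤ η :=
    le_trans (abs_nonneg _) (him 0 ⟨by linarith, hM.le⟩)
  have hc : 0 < 2 * η + 2 * ε := by linarith
  have hMτ : M * τb ≤ 2 * (Real.pi / 2 - Real.arctan (2 * η + 2 * ε)) := by
    have := mul_le_mul_of_nonneg_left hτb' hM.le
    rw [mul_comm M τb]
    calc τb * M ≤ (2 / M) * (Real.pi / 2 - Real.arctan (2 * η + 2 * ε)) * M := by
          exact mul_le_mul_of_nonneg_right hτb' hM.le
      _ = 2 * (Real.pi / 2 - Real.arctan (2 * η + 2 * ε)) := by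
          field_simp
  intro ω
  set z := T₀ ω with hz
  have key : ∀ S : Set ℂ, (∀ w ∈ S, ε ≤ dist z w) →
      ENNReal.ofReal ε ≤ EMetric.infEdist z S := by
    intro S h
    rw [EMetric.infEdist, EMetric.le_infEdist]
    intro w hw
    rw [edist_dist]
    exact ENNReal.ofReal_le_ofReal (h w hw)
  have keyre : M ≤ |ω| → ∀ w : ℂ, w.re = 1 / 2 → ε ≤ dist z w := by
    intro hωM w hw
    have h1 : z.re ≤ 1 / 2 - ε := hre ω hωM
    calc ε ≤ |z.re - w.re| := by rw [hw, abs_sub_comm, _root_.abs_of_nonneg] <;> linarith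
      _ = |(z - w).re| := by simp
      _ ≤ dist z w := by rw [Complex.dist_eq]; exact Complex.abs_re_le_norm _
  have keyim : ∀ w : ℂ, ε ≤ |z.im - w.im| → ε ≤ dist z w := by
    intro w h
    calc ε ≤ |(z - w).im| := by simpa using h
      _ ≤ dist z w := by rw [Complex.dist_eq]; exact Complex.abs_im_le_norm _
  by_cases h0 : ω * τb = 0
  · rw [Cut, if_pos h0]; simp [EMetric.infEdist]
  rw [Cut, if_neg h0]
  have hω0 : ω ≠ 0 := fun h => h0 (by rw [h, zero_mul])
  by_cases h2 : 2 * Real.pi ≤ |ω * τb|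
  · rw [if_pos h2]
    apply key
    intro w hw
    apply keyre _ w hw
    -- |ω| ≥ M since |ω| τb ≥ 2π ≥ 2 M τb ≥ M τb
    have hπ : Real.arctan (2 * η + 2 * ε) ≥ 0 := by simpa using (Real.arctan_strictMono hc).le
    have h3 : M * τb ≤ Real.pi := by linarith
    rw [abs_mul, abs_of_pos hτb] at h2
    nlinarith [abs_nonneg ω]
  · rw [if_neg h2]
    by_cases hωM : M ≤ |ω|
    · by_cases hpos : 0 < ω * τb
      · rw [if_pos hpos]
        apply key
        rintro w ⟨t, _, rfl⟩
        exact keyre hωM _ (by simp)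
      · rw [if_neg hpos]
        apply key
        rintro w ⟨t, _, rfl⟩
        exact keyre hωM _ (by simp)
    · push_neg at hωM
      have hzim : |z.im| ≤ η := him ω (abs_le.mp hωM.le)
      by_cases hpos : 0 < ω * τb
      · rw [if_pos hpos]
        apply key
        rintro w ⟨t, ht, rfl⟩
        have hωpos : 0 < ω := by by_contra h; push_neg at h; nlinarith
        have hωlt : ω < M := lt_of_abs_lt hωM
        have hx : ω * τb / 2 < Real.pi / 2 - Real.arctan (2 * η + 2 * ε) := by
          nlinarith
        have hcot := cot_lb (x := ω * τb / 2) (by positivity) hc hx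
        apply keyim
        have hwim : ((1 / 2 : ℂ) + ((t / 2 : ℝ) : ℂ) * Complex.I).im = t / 2 := by simp
        rw [hwim]
        have h1 : -η ≤ z.im := (abs_le.mp hzim).1
        rw [_root_.abs_of_nonneg] <;> linarith
      · rw [if_neg hpos]
        apply key
        rintro w ⟨t, ht, rfl⟩
        have hωneg : ω < 0 := by
          rcases lt_trichotomy ω 0 with h | h | h
          · exact h
          · exact absurd h hω0
          · exact absurd (mul_pos h hτb) hpos
        have hωlt : -M < ω := neg_lt_of_abs_lt hωM
        have hx : -(ω * τb) / 2 < Real.pi / 2 - Real.arctan (2 * η + 2 * ε) := by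
          nlinarith
        have hcot := cot_lb (x := -(ω * τb) / 2) (by nlinarith) hc hx
        have hcotneg : Real.cot (ω * τb / 2) = -Real.cot (-(ω * τb) / 2) := by
          rw [Real.cot_eq_cos_div_sin, Real.cot_eq_cos_div_sin]
          rw [show -(ω * τb) / 2 = -(ω * τb / 2) by ring, Real.sin_neg, Real.cos_neg]
          field_simp
        rw [hcotneg, neg_neg] at ht
        apply keyim
        have hwim : ((1 / 2 : ℂ) + ((t / 2 : ℝ) : ℂ) * Complex.I).im = t / 2 := by simp
        rw [hwim]
        have h1 : z.im ≤ η := (abs_le.mp hzim).2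
        rw [abs_sub_comm, _root_.abs_of_nonneg] <;> linarith
end

section
/- Distance interpretation of the unshifted weight: for all ω ∈ ℝ with 0 < |ωτ̄| (and τ̄ > 0), the distance from the origin 0 ∈ ℂ to the cut C(ωτ̄) equals 1/φ_τ̄(ω), where φ_τ̄(ω) = 2|sin(τ̄ω/2)| for |ωτ̄| ≤ π and 2 for |ωτ̄| > π, and C(φ) is the cut as defined before (half-line on Re = 1/2 starting at 1/2 - (i/2)cot(φ/2) for 0 < φ < 2π, the full line Re = 1/2 for |φ| ≥ 2π). -/
/-!
Every cut lies on the line `Re z = 1/2`, whose point `1/2 + (t/2) i` has modulus `√(1 + t²)/2`,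
so the distance is attained at the admissible parameter `t` of least modulus. For
`0 < φ ≤ π` the half-line `t ≤ -cot (φ/2)` lies in `t ≤ 0`, so the nearest point is its endpoint,
at distance `√(1 + cot² (φ/2))/2 = 1/(2 sin (φ/2))`; for `π < φ < 2π` it contains `t = 0`, at
distance `1/2`, as does the full line for `φ ≥ 2π`. Negative `φ` reduce to positive ones because
`C(-φ)` is the complex conjugate of `C(φ)`.
-/

open Complex Real Set

open Metric ComplexConjugate

theorem Metric.infDist_eq_dist_of_mem_of_forall_le {α : Type*} [PseudoMetricSpace α]
    {x y : α} {s : Set α} (hy : y ∈ s) (h : ∀ z ∈ s, dist x y ≤ dist x z) :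
    infDist x s = dist x y :=
  le_antisymm (infDist_le_dist_of_mem hy) ((le_infDist ⟨y, hy⟩).2 h)

namespace Real

theorem cot_neg (x : ℝ) : cot (-x) = -cot x := by
  simp only [cot_eq_cos_div_sin, cos_neg, sin_neg, div_neg]

theorem cot_nonneg_of_mem_Icc {x : ℝ} (h₀ : 0 ≤ x) (h₁ : x ≤ π / 2) : 0 ≤ cot x := by
  rw [cot_eq_cos_div_sin]
  exact div_nonneg (cos_nonneg_of_mem_Icc ⟨by linarith [pi_pos], h₁⟩)
    (sin_nonneg_of_nonneg_of_le_pi h₀ (by linarith [pi_pos]))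

theorem cot_nonpos_of_mem_Icc {x : ℝ} (h₀ : π / 2 ≤ x) (h₁ : x ≤ π) : cot x ≤ 0 := by
  rw [cot_eq_cos_div_sin]
  exact div_nonpos_of_nonpos_of_nonneg (cos_nonpos_of_pi_div_two_le_of_le h₀ (by linarith))
    (sin_nonneg_of_nonneg_of_le_pi (by linarith [pi_pos]) h₁)

theorem sqrt_one_add_cot_sq {x : ℝ} (hx : sin x ≠ 0) : √(1 + cot x ^ 2) = 1 / |sin x| := by
  have hsq : 1 + cot x ^ 2 = (1 / |sin x|) ^ 2 := by
    rw [cot_eq_cos_div_sin, div_pow, one_div_pow, sq_abs]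
    field_simp
    linarith [sin_sq_add_cos_sq x]
  rw [hsq, sqrt_sq (by positivity)]

end Real

noncomputable def cutPoint (t : ℝ) : ℂ := 1 / 2 + (t / 2 : ℝ) * I

@[simp]
theorem cutPoint_re (t : ℝ) : (cutPoint t).re = 1 / 2 := by
  simp [cutPoint]

@[simp]
theorem cutPoint_im (t : ℝ) : (cutPoint t).im = t / 2 := by
  simp [cutPoint]

theorem conj_cutPoint (t : ℝ) : conj (cutPoint t) = cutPoint (-t) :=
  Complex.ext (by simp) (by simp [neg_div])

theorem norm_cutPoint (t : ℝ) : ‖cutPoint t‖ = √(1 + t ^ 2) / 2 := by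
  rw [Complex.norm_def, Complex.normSq_apply, cutPoint_re, cutPoint_im,
    show 1 / 2 * (1 / 2) + t / 2 * (t / 2) = (1 + t ^ 2) / 2 ^ 2 by ring,
    sqrt_div' _ (sq_nonneg 2), sqrt_sq zero_le_two]

theorem infDist_zero_setOf_re_eq_half : infDist (0 : ℂ) {z | z.re = 1 / 2} = 1 / 2 := by
  have hmem : (1 / 2 : ℂ) ∈ {z : ℂ | z.re = 1 / 2} := by simp
  rw [infDist_eq_dist_of_mem_of_forall_le hmem]
  · simp
  · intro z hz
    rw [dist_zero_left, dist_zero_left]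
    calc ‖(1 / 2 : ℂ)‖ = |z.re| := by rw [hz]; norm_num
      _ ≤ ‖z‖ := abs_re_le_norm z

theorem infDist_zero_setOf_cutPoint_le (c : ℝ) :
    infDist (0 : ℂ) {z | ∃ t, t ≤ c ∧ z = cutPoint t} = √(1 + min c 0 ^ 2) / 2 := by
  have hmem : cutPoint (min c 0) ∈ {z | ∃ t, t ≤ c ∧ z = cutPoint t} :=
    ⟨min c 0, min_le_left c 0, rfl⟩
  rw [infDist_eq_dist_of_mem_of_forall_le hmem, dist_zero_left, norm_cutPoint]
  rintro _ ⟨t, ht, rfl⟩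
  rw [dist_zero_left, dist_zero_left, norm_cutPoint, norm_cutPoint]
  have hsq : min c 0 ^ 2 ≤ t ^ 2 := by
    rcases le_total c 0 with hc | hc
    · rw [min_eq_left hc]
      nlinarith
    · rw [min_eq_right hc]
      simpa using sq_nonneg t
  gcongr

theorem cut_neg_eq_image_conj {φ : ℝ} (h₀ : 0 < φ) (h₂ : φ < 2 * π) :
    Cut (-φ) = conj '' Cut φ := by
  have hφ : ¬ 2 * π ≤ |φ| := by rw [abs_of_pos h₀]; linarith
  rw [Cut, Cut, if_neg (neg_ne_zero.2 h₀.ne'), if_neg (by rwa [abs_neg]), if_neg (by linarith),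
    if_neg h₀.ne', if_neg hφ, if_pos h₀]
  ext z
  constructor
  · rintro ⟨t, ht, rfl⟩
    refine ⟨cutPoint (-t), ⟨-t, ?_, rfl⟩, by rw [conj_cutPoint, neg_neg]; rfl⟩
    rw [neg_div, cot_neg] at ht
    linarith
  · rintro ⟨_, ⟨t, ht, rfl⟩, rfl⟩
    exact ⟨-t, by rw [neg_div, cot_neg]; linarith, conj_cutPoint t⟩

theorem infDist_zero_cut_of_pos {φ : ℝ} (h₀ : 0 < φ) :
    infDist (0 : ℂ) (Cut φ) = 1 / (if φ ≤ π then 2 * |Real.sin (φ / 2)| else 2) := by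
  have hπ := pi_pos
  by_cases h₂ : 2 * π ≤ φ
  · rw [Cut, if_neg h₀.ne', if_pos (by rwa [abs_of_pos h₀]), if_neg (by linarith),
      infDist_zero_setOf_re_eq_half]
  rw [Cut, if_neg h₀.ne', if_neg (by rwa [abs_of_pos h₀]), if_pos h₀]
  change infDist 0 {z | ∃ t, t ≤ -Real.cot (φ / 2) ∧ z = cutPoint t} = _
  rw [infDist_zero_setOf_cutPoint_le]
  split_ifs with hφ
  · rw [min_eq_left (neg_nonpos.2 (cot_nonneg_of_mem_Icc (by linarith) (by linarith))), neg_sq,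
      sqrt_one_add_cot_sq (sin_pos_of_pos_of_lt_pi (by linarith) (by linarith)).ne',
      div_div, mul_comm]
  · rw [min_eq_right (neg_nonneg.2 (cot_nonpos_of_mem_Icc (by linarith) (by linarith)))]
    norm_num

theorem infDist_zero_cut_neg {φ : ℝ} (h₀ : 0 < φ) :
    infDist (0 : ℂ) (Cut (-φ)) = infDist 0 (Cut φ) := by
  by_cases h₂ : 2 * π ≤ φ
  · have hline : ∀ ψ : ℝ, |ψ| = φ → Cut ψ = {z | z.re = 1 / 2} := fun ψ hψ => by
      rw [Cut, if_neg (by rintro rfl; simp_all), if_pos (hψ ▸ h₂)]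
    rw [hline _ (by rw [abs_neg, abs_of_pos h₀]), hline _ (abs_of_pos h₀)]
  · rw [cut_neg_eq_image_conj h₀ (not_le.1 h₂), ← map_zero conj, infDist_image isometry_conj,
      map_zero]

theorem stmt16_general (ω τb : ℝ) (hωτ : ω * τb ≠ 0) :
    Metric.infDist (0 : ℂ) (Cut (ω * τb))
      = 1 / (if |ω * τb| ≤ Real.pi then 2 * |Real.sin (τb * ω / 2)| else 2) := by
  rw [mul_comm τb ω]
  generalize ω * τb = φ at *
  rcases hωτ.lt_or_gt with hneg | hpos
  · obtain ⟨ψ, hψ, rfl⟩ : ∃ ψ, 0 < ψ ∧ φ = -ψ := ⟨-φ, neg_pos.2 hneg, (neg_neg φ).symm⟩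
    rw [infDist_zero_cut_neg hψ, infDist_zero_cut_of_pos hψ, abs_neg, abs_of_pos hψ, neg_div,
      Real.sin_neg, abs_neg]
  · rw [infDist_zero_cut_of_pos hpos, abs_of_pos hpos]

/-- Distance interpretation of the unshifted weight: for `ωτ̄ ≠ 0`, the distance
from the origin to the cut `C(ωτ̄)` equals `1/φ_τ̄(ω)`, where
`φ_τ̄(ω) = 2|sin(τ̄ω/2)|` for `|ωτ̄| ≤ π` and `2` otherwise. -/
theorem stmt16 (ω τb : ℝ) (hτb : 0 < τb) (hωτ : ω * τb ≠ 0) :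
    Metric.infDist (0 : ℂ) (Cut (ω * τb))
      = 1 / (if |ω * τb| ≤ Real.pi then 2 * |Real.sin (τb * ω / 2)| else 2) :=
  stmt16_general ω τb hωτ
end
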